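/- Fix ε ∈ (0,1) and let B be a ball of radius r contained in Ω = [ε,1]². There exist constants c₁, c₂ > 0 depending only on ε such that for all (a,b) ∈ ℤ_{≥0}² with a + b > 0 and h_{a,b} sufficiently large, the number of c ∈ ℤ_{≥0} for which the line R_{a,b,c} = {(x,y) ∈ ℝ² : a²x + b²y − c² = 0} intersects B lies between c₁ r h_{a,b} and c₂ r h_{a,b}; equivalently, this number is comparable to r h_{a,b}. -/

import Mathlib

open MeasureTheory Filter Set

/-- The set `σ_{a,b}(c) = {(x,y) ∈ [0,1]² : |a²x + b²y − c²| < ψ(h_{a,b})}`,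
where `h_{a,b} = max(a,b)`. -/
def sigC (ψ : ℝ → ℝ) (a b c : ℕ) : Set (EuclideanSpace ℝ (Fin 2)) :=
  {p | p 0 ∈ Set.Icc (0 : ℝ) 1 ∧ p 1 ∈ Set.Icc (0 : ℝ) 1 ∧
    |(a : ℝ) ^ 2 * p 0 + (b : ℝ) ^ 2 * p 1 - (c : ℝ) ^ 2| < ψ ((max a b : ℕ) : ℝ)}

/-- The set `σ_{a,b} = ⋃_{c ∈ ℤ_{≥0}} σ_{a,b}(c)`. -/
def sigU (ψ : ℝ → ℝ) (a b : ℕ) : Set (EuclideanSpace ℝ (Fin 2)) :=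
  ⋃ c : ℕ, sigC ψ a b c

/-- The square `Ω = [ε,1]²`. -/
def unitSq (ε : ℝ) : Set (EuclideanSpace ℝ (Fin 2)) :=
  {p | p 0 ∈ Set.Icc ε 1 ∧ p 1 ∈ Set.Icc ε 1}

/-- The line `R_{a,b,c} = {(x,y) ∈ ℝ² : a²x + b²y − c² = 0}`. -/
def lineR (a b c : ℕ) : Set (EuclideanSpace ℝ (Fin 2)) :=
  {p | (a : ℝ) ^ 2 * p 0 + (b : ℝ) ^ 2 * p 1 - (c : ℝ) ^ 2 = 0}

/-!
The line `R_{a,b,c}` is the level set `⟪n, p⟫ = c²` of the normal vector `n = (a², b²)`, so it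
meets `B(x₀, r)` exactly when `c²` lies within `R = r‖n‖` of `t = ⟪n, x₀⟫`. With `h = max a b`
we have `‖n‖ ≍ h²` and, since `x₀ ∈ [ε,1]²`, `t ≍ h²`; hence the admissible `c` are the integers
in `(√(t - R), √(t + R))`, an interval of length `≍ R / √t ≍ r h`. Once `r h ≥ 8` the rounding
error of at most one integer is absorbed into the constants.
-/

theorem sub_sub_one_le_ncard_natCast_preimage_Ioo {u v : ℝ} (hu : 0 ≤ u) :
    v - u - 1 ≤ ((Nat.cast ⁻¹' Ioo u v : Set ℕ).ncard : ℝ) := by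
  rw [Nat.preimage_Ioo hu, ← Finset.coe_Ioo, ncard_coe_finset, Nat.card_Ioo, Nat.sub_sub]
  have hcard : (⌈v⌉₊ : ℝ) ≤ ((⌈v⌉₊ - (⌊u⌋₊ + 1) : ℕ) : ℝ) + ⌊u⌋₊ + 1 := by
    exact_mod_cast (by omega : ⌈v⌉₊ ≤ ⌈v⌉₊ - (⌊u⌋₊ + 1) + ⌊u⌋₊ + 1)
  linarith [Nat.floor_le hu, Nat.le_ceil v]

theorem ncard_natCast_preimage_Icc_le {u v : ℝ} (hv : 0 ≤ v) (huv : u ≤ v) :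
    ((Nat.cast ⁻¹' Icc u v : Set ℕ).ncard : ℝ) ≤ v - u + 1 := by
  rw [Nat.preimage_Icc hv, ← Finset.coe_Icc, ncard_coe_finset, Nat.card_Icc]
  obtain h | h := le_or_gt ⌈u⌉₊ (⌊v⌋₊ + 1)
  · rw [Nat.cast_sub h]
    push_cast
    linarith [Nat.le_ceil u, Nat.floor_le hv]
  · rw [Nat.sub_eq_zero_of_le h.le]
    push_cast
    linarith

theorem natCast_preimage_Ioo_sqrt_subset (α β : ℝ) :
    Nat.cast ⁻¹' Ioo √α √β ⊆ (fun c : ℕ => (c : ℝ) ^ 2) ⁻¹' Ioo α β := by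
  rintro c ⟨hα, hβ⟩
  have hc : (0 : ℝ) < c := (Real.sqrt_nonneg α).trans_lt hα
  exact ⟨(Real.sqrt_lt' hc).mp hα, (Real.lt_sqrt hc.le).mp hβ⟩

theorem sq_preimage_Ioo_subset_natCast_preimage_Icc (α β : ℝ) :
    (fun c : ℕ => (c : ℝ) ^ 2) ⁻¹' Ioo α β ⊆ Nat.cast ⁻¹' Icc √α √β := by
  rintro c ⟨hα, hβ⟩
  exact ⟨Real.sqrt_le_iff.mpr ⟨c.cast_nonneg, hα.le⟩, Real.le_sqrt_of_sq_le hβ.le⟩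

theorem ncard_sq_preimage_Ioo_bounds {α β : ℝ} (hαβ : α ≤ β) :
    √β - √α - 1 ≤ (((fun c : ℕ => (c : ℝ) ^ 2) ⁻¹' Ioo α β).ncard : ℝ) ∧
      (((fun c : ℕ => (c : ℝ) ^ 2) ⁻¹' Ioo α β).ncard : ℝ) ≤ √β - √α + 1 := by
  have hfin : (Nat.cast ⁻¹' Icc √α √β : Set ℕ).Finite := by
    rw [Nat.preimage_Icc (Real.sqrt_nonneg β)]
    exact finite_Icc _ _
  constructor
  · calc √β - √α - 1 ≤ ((Nat.cast ⁻¹' Ioo √α √β : Set ℕ).ncard : ℝ) :=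
          sub_sub_one_le_ncard_natCast_preimage_Ioo (Real.sqrt_nonneg α)
      _ ≤ _ := by
          gcongr
          · exact hfin.subset (sq_preimage_Ioo_subset_natCast_preimage_Icc α β)
          · exact natCast_preimage_Ioo_sqrt_subset α β
  · calc _ ≤ ((Nat.cast ⁻¹' Icc √α √β : Set ℕ).ncard : ℝ) := by
          gcongr
          exact sq_preimage_Ioo_subset_natCast_preimage_Icc α β
      _ ≤ √β - √α + 1 :=
          ncard_natCast_preimage_Icc_le (Real.sqrt_nonneg β) (Real.sqrt_le_sqrt hαβ)

theorem sqrt_add_sub_sqrt_sub_bounds {t R : ℝ} (ht : 0 ≤ t) (hR : 0 ≤ R) :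
    R ≤ 2 * √(t + R) * (√(t + R) - √(t - R)) ∧
      √(t + R) * (√(t + R) - √(t - R)) ≤ 2 * R := by
  have hsq : √(t + R) ^ 2 - √(t - R) ^ 2 ∈ Icc R (2 * R) := by
    rw [Real.sq_sqrt (by linarith), Real.sq_sqrt']
    constructor <;> cases max_cases (t - R) 0 <;> linarith
  have hle : √(t - R) ≤ √(t + R) := Real.sqrt_le_sqrt (by linarith)
  have hnn := Real.sqrt_nonneg (t - R)
  constructor <;> nlinarith [hsq.1, hsq.2]

theorem ncard_sq_preimage_Ioo_comparable {ε r h t R : ℝ} (hε : 0 < ε) (hr : 0 < r) (hr1 : r ≤ 1)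
    (hrh : 8 ≤ r * h) (ht : t ∈ Icc (ε * h ^ 2) (2 * h ^ 2))
    (hR : R ∈ Icc (r * h ^ 2) (r * (2 * h ^ 2))) :
    1 / 8 * r * h ≤ (((fun c : ℕ => (c : ℝ) ^ 2) ⁻¹' Ioo (t - R) (t + R)).ncard : ℝ) ∧
      (((fun c : ℕ => (c : ℝ) ^ 2) ⁻¹' Ioo (t - R) (t + R)).ncard : ℝ) ≤
        (4 / √ε + 1) * r * h := by
  obtain ⟨htl, htu⟩ := ht
  obtain ⟨hRl, hRu⟩ := hR
  have hh : 0 < h := pos_of_mul_pos_right (by linarith) hr.le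
  have hsε : 0 < √ε := Real.sqrt_pos.mpr hε
  have ht0 : 0 ≤ t := (by positivity : 0 ≤ ε * h ^ 2).trans htl
  have hR0 : 0 ≤ R := (by positivity : 0 ≤ r * h ^ 2).trans hRl
  have hv_le : √(t + R) ≤ 2 * h := (Real.sqrt_le_left (by positivity)).mpr (by nlinarith)
  have hv_ge : √ε * h ≤ √(t + R) := by
    refine (Real.le_sqrt (by positivity) (by positivity)).mpr ?_
    rw [mul_pow, Real.sq_sqrt hε.le]
    nlinarith
  obtain ⟨hcl, hcu⟩ := ncard_sq_preimage_Ioo_bounds (show t - R ≤ t + R by linarith)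
  obtain ⟨hsl, hsu⟩ := sqrt_add_sub_sqrt_sub_bounds ht0 hR0
  have hgap : 0 ≤ √(t + R) - √(t - R) := sub_nonneg.mpr (Real.sqrt_le_sqrt (by linarith))
  have hgap_l : r * h / 4 ≤ √(t + R) - √(t - R) := by
    nlinarith [mul_le_mul_of_nonneg_right hv_le hgap]
  have hgap_u : √(t + R) - √(t - R) ≤ 4 / √ε * r * h := by
    rw [div_mul_eq_mul_div, div_mul_eq_mul_div, le_div_iff₀ hsε]
    nlinarith [mul_le_mul_of_nonneg_right hv_ge hgap]
  constructor <;> linarith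

open scoped RealInnerProductSpace

theorem inter_ball_nonempty_iff_abs_inner_sub_lt {E : Type*} [NormedAddCommGroup E]
    [InnerProductSpace ℝ E] {n : E} (hn : n ≠ 0) (x : E) (r C : ℝ) :
    ({p | ⟪n, p⟫ = C} ∩ Metric.ball x r).Nonempty ↔ |⟪n, x⟫ - C| < r * ‖n‖ := by
  have hn' : 0 < ‖n‖ := norm_pos_iff.mpr hn
  constructor
  · rintro ⟨p, hp, hpx⟩
    calc |⟪n, x⟫ - C| = |⟪n, x - p⟫| := by rw [inner_sub_right, mem_ofPred_eq.mp hp]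
      _ ≤ ‖n‖ * ‖x - p‖ := abs_real_inner_le_norm n _
      _ < ‖n‖ * r := by
          gcongr
          rwa [← dist_eq_norm, dist_comm]
      _ = r * ‖n‖ := mul_comm _ _
  · intro h
    -- the foot of the perpendicular from `x` to the hyperplane
    refine ⟨x - ((⟪n, x⟫ - C) / ‖n‖ ^ 2) • n, ?_, ?_⟩
    · rw [mem_ofPred_eq, inner_sub_right, inner_smul_right, real_inner_self_eq_norm_sq]
      field_simp
      ring
    · rw [Metric.mem_ball, dist_eq_norm, sub_sub_cancel_left, norm_neg, norm_smul, norm_div,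
        norm_pow, norm_norm, Real.norm_eq_abs, div_mul_eq_mul_div, pow_two, ← div_div,
        mul_div_cancel_right₀ _ hn'.ne', div_lt_iff₀ hn']
      exact h

def lineNormal (a b : ℕ) : EuclideanSpace ℝ (Fin 2) := !₂[(a : ℝ) ^ 2, (b : ℝ) ^ 2]

theorem inner_lineNormal (a b : ℕ) (p : EuclideanSpace ℝ (Fin 2)) :
    ⟪lineNormal a b, p⟫ = (a : ℝ) ^ 2 * p 0 + (b : ℝ) ^ 2 * p 1 := by
  simp [lineNormal, PiLp.inner_apply, Fin.sum_univ_two]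
  ring

theorem lineR_eq_setOf_inner (a b c : ℕ) :
    lineR a b c = {p | ⟪lineNormal a b, p⟫ = (c : ℝ) ^ 2} := by
  ext p
  rw [lineR, mem_ofPred_eq, mem_ofPred_eq, inner_lineNormal, sub_eq_zero]

theorem natCast_pow_add_pow_mem_Icc_max (a b k : ℕ) :
    (a : ℝ) ^ k + (b : ℝ) ^ k ∈ Icc (((max a b : ℕ) : ℝ) ^ k) (2 * ((max a b : ℕ) : ℝ) ^ k) := by
  rcases le_total a b with hab | hab
  · have : (a : ℝ) ^ k ≤ (b : ℝ) ^ k := by gcongr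
    rw [max_eq_right hab]
    constructor <;> linarith [pow_nonneg (Nat.cast_nonneg (α := ℝ) a) k]
  · have : (b : ℝ) ^ k ≤ (a : ℝ) ^ k := by gcongr
    rw [max_eq_left hab]
    constructor <;> linarith [pow_nonneg (Nat.cast_nonneg (α := ℝ) b) k]

theorem norm_lineNormal_mem_Icc (a b : ℕ) :
    ‖lineNormal a b‖ ∈ Icc (((max a b : ℕ) : ℝ) ^ 2) (2 * ((max a b : ℕ) : ℝ) ^ 2) := by
  have hnorm : ‖lineNormal a b‖ = √((a : ℝ) ^ 4 + (b : ℝ) ^ 4) := by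
    simp [lineNormal, EuclideanSpace.norm_eq, Fin.sum_univ_two, ← pow_mul]
  obtain ⟨hl, hu⟩ := natCast_pow_add_pow_mem_Icc_max a b 4
  rw [hnorm]
  constructor
  · exact Real.le_sqrt_of_sq_le (by rw [← pow_mul]; exact hl)
  · refine (Real.sqrt_le_left (by positivity)).mpr ?_
    nlinarith [pow_nonneg (Nat.cast_nonneg (α := ℝ) (max a b)) 4]

theorem inner_lineNormal_mem_Icc {ε : ℝ} (hε : 0 ≤ ε) (a b : ℕ) {x : EuclideanSpace ℝ (Fin 2)}
    (hx : x ∈ unitSq ε) :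
    ⟪lineNormal a b, x⟫ ∈ Icc (ε * ((max a b : ℕ) : ℝ) ^ 2) (2 * ((max a b : ℕ) : ℝ) ^ 2) := by
  obtain ⟨⟨hx0, hx0'⟩, hx1, hx1'⟩ := hx
  obtain ⟨hl, hu⟩ := natCast_pow_add_pow_mem_Icc_max a b 2
  have ha := sq_nonneg (a : ℝ)
  have hb := sq_nonneg (b : ℝ)
  rw [inner_lineNormal]
  constructor <;> nlinarith

theorem setOf_lineR_inter_ball_nonempty {a b : ℕ} (hab : 0 < a + b)
    (x : EuclideanSpace ℝ (Fin 2)) (r : ℝ) :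
    {c : ℕ | (lineR a b c ∩ Metric.ball x r).Nonempty} =
      (fun c : ℕ => (c : ℝ) ^ 2) ⁻¹'
        Ioo (⟪lineNormal a b, x⟫ - r * ‖lineNormal a b‖)
          (⟪lineNormal a b, x⟫ + r * ‖lineNormal a b‖) := by
  have hn : lineNormal a b ≠ 0 := by
    refine norm_pos_iff.mp (lt_of_lt_of_le ?_ (norm_lineNormal_mem_Icc a b).1)
    exact pow_pos (Nat.cast_pos.mpr (by omega)) 2
  ext c
  rw [mem_ofPred_eq, lineR_eq_setOf_inner, inter_ball_nonempty_iff_abs_inner_sub_lt hn,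
    mem_preimage, mem_Ioo, abs_sub_lt_iff]
  constructor <;> rintro ⟨h₁, h₂⟩ <;> constructor <;> linarith

theorem radius_le_of_ball_subset_unitSq {ε r : ℝ} (hr : 0 < r) {x : EuclideanSpace ℝ (Fin 2)}
    (hB : Metric.ball x r ⊆ unitSq ε) : r ≤ 1 - ε := by
  have hmem : ∀ s : ℝ, |s| < r → ε ≤ x 0 + s ∧ x 0 + s ≤ 1 := fun s hs => by
    have hs' : x + s • EuclideanSpace.single 0 1 ∈ Metric.ball x r := by
      simpa [dist_eq_norm, norm_smul, PiLp.norm_single] using hs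
    simpa using (hB hs').1
  have h₁ := hmem (r / 2) (by rw [abs_of_pos (by positivity)]; linarith)
  have h₂ := hmem (-(r / 2)) (by rw [abs_neg, abs_of_pos (by positivity)]; linarith)
  linarith [h₁.2, h₂.1]

theorem count_of_lines_hitting_ball
    (ε : ℝ) (hε : ε ∈ Set.Ioo (0 : ℝ) 1) :
    ∃ c₁ c₂ : ℝ, 0 < c₁ ∧ 0 < c₂ ∧
      ∀ (x₀ : EuclideanSpace ℝ (Fin 2)) (r : ℝ), 0 < r →
        Metric.ball x₀ r ⊆ unitSq ε →
        ∃ H₀ : ℕ, ∀ a b : ℕ, 0 < a + b → H₀ ≤ max a b →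
          c₁ * r * ((max a b : ℕ) : ℝ) ≤
              (({c : ℕ | (lineR a b c ∩ Metric.ball x₀ r).Nonempty}.ncard : ℝ)) ∧
            (({c : ℕ | (lineR a b c ∩ Metric.ball x₀ r).Nonempty}.ncard : ℝ)) ≤
              c₂ * r * ((max a b : ℕ) : ℝ) := by
  refine ⟨1 / 8, 4 / √ε + 1, by norm_num, by positivity,
    fun x₀ r hr hB => ⟨⌈8 / r⌉₊, fun a b hab hH => ?_⟩⟩
  have hrh : 8 ≤ r * ((max a b : ℕ) : ℝ) := by
    rw [mul_comm, ← div_le_iff₀ hr]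
    exact Nat.ceil_le.mp hH
  have hr1 : r ≤ 1 := by linarith [radius_le_of_ball_subset_unitSq hr hB, hε.1]
  obtain ⟨hn₁, hn₂⟩ := norm_lineNormal_mem_Icc a b
  rw [setOf_lineR_inter_ball_nonempty hab]
  exact ncard_sq_preimage_Ioo_comparable hε.1 hr hr1 hrh
    (inner_lineNormal_mem_Icc hε.1.le a b (hB (Metric.mem_ball_self hr)))
    ⟨mul_le_mul_of_nonneg_left hn₁ hr.le, mul_le_mul_of_nonneg_left hn₂ hr.le⟩
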